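/- For Schwartz functions f, g on ℝⁿ, the Moyal product satisfies the Leibniz rule: ∂_μ(f ⋆_Θ g) = (∂_μ f) ⋆_Θ g + f ⋆_Θ (∂_μ g) for each coordinate direction μ. -/

import Mathlib

/-!
Splitting off the `y`-integral gives
`(f ⋆_Θ g)(x) = (2π)⁻ⁿ ∫ e^{iξ·x} f(x - ½Θξ) ĝ(ξ) dξ` with `ĝ(ξ) = ∫ e^{-iξ·y} g(y) dy`,
again a Schwartz function. The `x`-derivative of the integrand,
`e^{iξ·x} ĝ(ξ) (Df(x - ½Θξ) + i f(x - ½Θξ) ξ·(-))`, is dominated by `‖ĝ(ξ)‖ (C + C' ‖ξ‖)`,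
which is integrable, so we may differentiate under the integral sign. In direction `e_μ` the
first term gives `(∂_μ f) ⋆_Θ g`, and since integration by parts yields `(∂_μ g)^ = i ξ_μ ĝ`,
the second gives `f ⋆_Θ (∂_μ g)`.
-/

open MeasureTheory Complex

/-- The Moyal product of two functions on `ℝⁿ` (given by its oscillatory-integral
formula), for a real `n × n` matrix `Θ`. -/
noncomputable def moyal (n : ℕ) (Θ : Matrix (Fin n) (Fin n) ℝ)
    (f g : (Fin n → ℝ) → ℂ) : (Fin n → ℝ) → ℂ :=
  fun x => (((2 * Real.pi) ^ n : ℝ) : ℂ)⁻¹ *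
    ∫ ξ : Fin n → ℝ, ∫ y : Fin n → ℝ,
      Complex.exp (Complex.I * (∑ i, ξ i * (x i - y i))) *
        f (x - (1 / 2 : ℝ) • Θ.mulVec ξ) * g y

/-- The partial derivative in the `μ`-th coordinate direction. -/
noncomputable def pderiv' (n : ℕ) (μ : Fin n) (f : (Fin n → ℝ) → ℂ) :
    (Fin n → ℝ) → ℂ :=
  fun x => fderiv ℝ f x (Pi.single μ 1)

open SchwartzMap LineDeriv

section Phase

variable {V : Type*} [NormedAddCommGroup V] [NormedSpace ℝ V]

theorem hasFDerivAt_cexp_I_mul_ofReal (ℓ : V →L[ℝ] ℝ) (z : V) :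
    HasFDerivAt (fun w => cexp (I * ℓ w)) (cexp (I * ℓ z) • I • (ofRealCLM ∘L ℓ)) z :=
  ((ofRealCLM ∘L ℓ).hasFDerivAt.const_mul I).cexp

theorem fderiv_cexp_I_mul_ofReal_apply (ℓ : V →L[ℝ] ℝ) (z v : V) :
    fderiv ℝ (fun w => cexp (I * ℓ w)) z v = I * ℓ v * cexp (I * ℓ z) := by
  rw [(hasFDerivAt_cexp_I_mul_ofReal ℓ z).fderiv]
  simp only [FunLike.coe_smul, Pi.smul_apply, ContinuousLinearMap.comp_apply, ofRealCLM_apply,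
    smul_eq_mul]
  ring

theorem integrable_cexp_I_mul_ofReal_mul [MeasurableSpace V] [OpensMeasurableSpace V]
    {μ : Measure V} (ℓ : V →L[ℝ] ℝ) {g : V → ℂ} (hg : Integrable g μ) :
    Integrable (fun y => cexp (I * ℓ y) * g y) μ :=
  hg.bdd_mul (by fun_prop) (.of_forall fun _ => (norm_exp_I_mul_ofReal _).le)

theorem SchwartzMap.integral_cexp_I_mul_ofReal_mul_lineDerivOp [FiniteDimensional ℝ V]
    [MeasurableSpace V] [BorelSpace V] {μ : Measure V} [μ.IsAddHaarMeasure]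
    (ℓ : V →L[ℝ] ℝ) (g : 𝓢(V, ℂ)) (v : V) :
    ∫ y, cexp (I * ℓ y) * ∂_{v} g y ∂μ = -(I * ℓ v) * ∫ y, cexp (I * ℓ y) * g y ∂μ := by
  have hphase (y : V) := fderiv_cexp_I_mul_ofReal_apply ℓ y v
  have hint := integrable_cexp_I_mul_ofReal_mul ℓ g.integrable (μ := μ)
  calc ∫ y, cexp (I * ℓ y) * fderiv ℝ g y v ∂μ
      = -∫ y, fderiv ℝ (fun w => cexp (I * ℓ w)) y v * g y ∂μ := by
        refine integral_mul_fderiv_eq_neg_fderiv_mul_of_integrable ?_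
          (integrable_cexp_I_mul_ofReal_mul ℓ (∂_{v} g).integrable) hint
          (fun _ _ => (hasFDerivAt_cexp_I_mul_ofReal ℓ _).differentiableAt)
          (fun _ _ => g.differentiableAt)
        simpa only [hphase, mul_assoc] using hint.const_mul (I * ℓ v)
    _ = -(I * ℓ v) * ∫ y, cexp (I * ℓ y) * g y ∂μ := by
        simp_rw [hphase, mul_assoc, integral_const_mul]
        ring

end Phase

section MoyalIntegral

variable {V : Type*} [NormedAddCommGroup V] [NormedSpace ℝ V] (L : V →L[ℝ] V →L[ℝ] ℝ)
  (A : V → V)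

noncomputable def moyalIntegrand (f G : V → ℂ) (x ξ : V) : ℂ :=
  cexp (I * L ξ x) * f (x - A ξ) * G ξ

noncomputable def moyalIntegrandDeriv (f G : V → ℂ) (x ξ : V) : V →L[ℝ] ℂ :=
  (cexp (I * L ξ x) * G ξ) • (fderiv ℝ f (x - A ξ) + (I * f (x - A ξ)) • (ofRealCLM ∘L L ξ))

theorem hasFDerivAt_moyalIntegrand (f : 𝓢(V, ℂ)) (G : V → ℂ) (x ξ : V) :
    HasFDerivAt (moyalIntegrand L A f G · ξ) (moyalIntegrandDeriv L A f G x ξ) x := by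
  have hf : HasFDerivAt (fun w => f (w - A ξ)) (fderiv ℝ f (x - A ξ)) x := by
    have := (f.hasFDerivAt (x - A ξ)).comp x ((hasFDerivAt_id x).sub_const (A ξ))
    rwa [ContinuousLinearMap.comp_id] at this
  refine (((hasFDerivAt_cexp_I_mul_ofReal (L ξ) x).mul hf).mul_const (G ξ)).congr_fderiv ?_
  ext v
  simp only [moyalIntegrandDeriv, FunLike.coe_smul, Pi.smul_apply, add_apply,
    ContinuousLinearMap.comp_apply, ofRealCLM_apply, smul_eq_mul]
  ring

theorem moyalIntegrandDeriv_apply (f G : 𝓢(V, ℂ)) (x ξ v : V) :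
    moyalIntegrandDeriv L A f G x ξ v = moyalIntegrand L A (∂_{v} f : 𝓢(V, ℂ)) G x ξ +
      moyalIntegrand L A f (fun ξ => I * L ξ v * G ξ) x ξ := by
  simp only [moyalIntegrandDeriv, moyalIntegrand, FunLike.coe_smul, Pi.smul_apply, add_apply,
    ContinuousLinearMap.comp_apply, ofRealCLM_apply, smul_eq_mul, lineDerivOp_apply_eq_fderiv]
  ring

theorem norm_moyalIntegrandDeriv_le (f : 𝓢(V, ℂ)) (G : V → ℂ) (x ξ : V) :
    ‖moyalIntegrandDeriv L A f G x ξ‖ ≤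
      ‖G ξ‖ * (SchwartzMap.seminorm ℝ 0 0 (fderivCLM ℝ V ℂ f) +
        SchwartzMap.seminorm ℝ 0 0 f * ‖L‖ * ‖ξ‖) := by
  have hf : ‖f (x - A ξ)‖ ≤ SchwartzMap.seminorm ℝ 0 0 f := f.norm_le_seminorm ℝ _
  have hf' : ‖fderiv ℝ f (x - A ξ)‖ ≤ SchwartzMap.seminorm ℝ 0 0 (fderivCLM ℝ V ℂ f) :=
    (fderivCLM ℝ V ℂ f).norm_le_seminorm ℝ _
  have hL : ‖ofRealCLM ∘L L ξ‖ ≤ ‖L‖ * ‖ξ‖ := by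
    refine (ContinuousLinearMap.opNorm_comp_le _ _).trans ?_
    rw [ofRealCLM_norm, one_mul]
    exact L.le_opNorm ξ
  refine (ContinuousLinearMap.opNorm_smul_le _ _).trans ?_
  rw [norm_mul, norm_exp_I_mul_ofReal, one_mul]
  refine mul_le_mul_of_nonneg_left ((norm_add_le _ _).trans (add_le_add hf' ?_)) (norm_nonneg _)
  refine (ContinuousLinearMap.opNorm_smul_le _ _).trans ?_
  rw [norm_mul, norm_I, one_mul, mul_assoc]
  exact mul_le_mul hf hL (norm_nonneg _) ((norm_nonneg _).trans hf)

variable [MeasurableSpace V] [BorelSpace V] [SecondCountableTopology V] (μ : Measure V)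

noncomputable def moyalIntegral (f G : V → ℂ) (x : V) : ℂ :=
  ∫ ξ, moyalIntegrand L A f G x ξ ∂μ

variable {A}

theorem integrable_moyalIntegrand (hA : Continuous A) (f : 𝓢(V, ℂ)) {G : V → ℂ}
    (hG : Integrable G μ) (x : V) : Integrable (moyalIntegrand L A f G x) μ :=
  hG.bdd_mul (c := SchwartzMap.seminorm ℝ 0 0 f) (by fun_prop)
    (.of_forall fun ξ => by
      rw [norm_mul, norm_exp_I_mul_ofReal, one_mul]
      exact f.norm_le_seminorm ℝ _)

variable [μ.HasTemperateGrowth]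

theorem SchwartzMap.integrable_norm_mul_affine (G : 𝓢(V, ℂ)) (a b : ℝ) :
    Integrable (fun ξ => ‖G ξ‖ * (a + b * ‖ξ‖)) μ := by
  refine ((G.integrable.norm.const_mul a).add ((G.integrable_pow_mul μ 1).const_mul b)).congr
    (.of_forall fun ξ => ?_)
  simp only [pow_one, Pi.add_apply]
  ring

theorem SchwartzMap.integrable_I_mul_bilin_mul (G : 𝓢(V, ℂ)) (v : V) :
    Integrable (fun ξ => I * L ξ v * G ξ) μ := by
  refine ((G.integrable_pow_mul μ 1).const_mul (‖L‖ * ‖v‖)).mono' (by fun_prop)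
    (.of_forall fun ξ => ?_)
  rw [norm_mul, norm_mul, norm_I, one_mul, norm_real, pow_one]
  calc ‖L ξ v‖ * ‖G ξ‖ ≤ ‖L‖ * ‖ξ‖ * ‖v‖ * ‖G ξ‖ := by gcongr; exact L.le_opNorm₂ ξ v
    _ = _ := by ring

theorem integrable_moyalIntegrandDeriv (hA : Continuous A) (f G : 𝓢(V, ℂ)) (x : V) :
    Integrable (moyalIntegrandDeriv L A f G x) μ := by
  have hf' : Continuous (fderiv ℝ f) := (fderivCLM ℝ V ℂ f).continuous
  exact (G.integrable_norm_mul_affine μ _ _).mono' (by unfold moyalIntegrandDeriv; fun_prop)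
    (.of_forall fun ξ => norm_moyalIntegrandDeriv_le L A f G x ξ)

theorem hasFDerivAt_moyalIntegral (hA : Continuous A) (f G : 𝓢(V, ℂ)) (x : V) :
    HasFDerivAt (moyalIntegral L A μ f G) (∫ ξ, moyalIntegrandDeriv L A f G x ξ ∂μ) x :=
  hasFDerivAt_integral_of_dominated_of_fderiv_le Filter.univ_mem
    (.of_forall fun z => (integrable_moyalIntegrand L μ hA f G.integrable z).aestronglyMeasurable)
    (integrable_moyalIntegrand L μ hA f G.integrable x)
    (integrable_moyalIntegrandDeriv L μ hA f G x).aestronglyMeasurable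
    (.of_forall fun ξ z _ => norm_moyalIntegrandDeriv_le L A f G z ξ)
    (G.integrable_norm_mul_affine μ _ _)
    (.of_forall fun ξ z _ => hasFDerivAt_moyalIntegrand L A f G z ξ)

theorem fderiv_moyalIntegral_apply (hA : Continuous A) (f G : 𝓢(V, ℂ)) (x v : V) :
    fderiv ℝ (moyalIntegral L A μ f G) x v =
      moyalIntegral L A μ (∂_{v} f : 𝓢(V, ℂ)) G x +
        moyalIntegral L A μ f (fun ξ => I * L ξ v * G ξ) x := by
  rw [(hasFDerivAt_moyalIntegral L μ hA f G x).fderiv,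
    ContinuousLinearMap.integral_apply (integrable_moyalIntegrandDeriv L μ hA f G x),
    moyalIntegral, moyalIntegral, ← integral_add
      (integrable_moyalIntegrand L μ hA _ G.integrable x)
      (integrable_moyalIntegrand L μ hA f (G.integrable_I_mul_bilin_mul L μ v) x)]
  simp only [moyalIntegrandDeriv_apply]

end MoyalIntegral

section Moyal

open Real FourierTransform

variable {n : ℕ}

noncomputable def dotProductCLM (n : ℕ) : (Fin n → ℝ) →L[ℝ] (Fin n → ℝ) →L[ℝ] ℝ :=
  ∑ i, (ContinuousLinearMap.proj i).smulRight (ContinuousLinearMap.proj i)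

@[simp] theorem dotProductCLM_apply (v w : Fin n → ℝ) : dotProductCLM n v w = v ⬝ᵥ w := by
  simp [dotProductCLM, dotProduct]

/-- `ĝ(ξ) = ∫ e^{-iξ·y} g(y) dy` (`SchwartzMap.fourierDot_apply`), obtained from Mathlib's `𝓕`,
whose phase is `e^{-2πi⟪y, w⟫}`, at `w = ξ / 2π` on `EuclideanSpace`. -/
noncomputable def SchwartzMap.fourierDot (g : 𝓢(Fin n → ℝ, ℂ)) : 𝓢(Fin n → ℝ, ℂ) :=
  compCLMOfContinuousLinearEquiv ℝ
    ((ContinuousLinearEquiv.smulLeft (Units.mk0 (2 * π)⁻¹ (by positivity))).trans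
      (EuclideanSpace.equiv (Fin n) ℝ).symm)
    (𝓕 (compCLMOfContinuousLinearEquiv ℝ (EuclideanSpace.equiv (Fin n) ℝ) g))

theorem SchwartzMap.fourierDot_apply (g : 𝓢(Fin n → ℝ, ℂ)) (ξ : Fin n → ℝ) :
    g.fourierDot ξ = ∫ y, cexp (I * ((-ξ) ⬝ᵥ y : ℝ)) * g y := by
  rw [fourierDot, compCLMOfContinuousLinearEquiv_apply, Function.comp_apply, fourier_coe,
    Real.fourier_eq, ← (PiLp.volume_preserving_toLp (Fin n)).integral_comp
      (MeasurableEquiv.toLp 2 (Fin n → ℝ)).measurableEmbedding]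
  congr 1 with y
  have hphase : 2 * π * -inner ℝ (WithLp.toLp 2 y) (WithLp.toLp 2 ((2 * π)⁻¹ • ξ)) =
      (-ξ) ⬝ᵥ y := by
    simp only [PiLp.inner_apply, RCLike.inner_apply, conj_trivial, Pi.smul_apply, smul_eq_mul,
      dotProduct, Pi.neg_apply, Finset.mul_sum, ← Finset.sum_neg_distrib]
    refine Finset.sum_congr rfl fun i _ => ?_
    field_simp
  rw [Circle.smul_def, Real.fourierChar_apply]
  change cexp (↑(2 * π * -inner ℝ (WithLp.toLp 2 y) (WithLp.toLp 2 ((2 * π)⁻¹ • ξ))) * I) • g y = _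
  rw [hphase, smul_eq_mul, mul_comm _ I]

theorem SchwartzMap.fourierDot_lineDerivOp (g : 𝓢(Fin n → ℝ, ℂ)) (v ξ : Fin n → ℝ) :
    (∂_{v} g : 𝓢(Fin n → ℝ, ℂ)).fourierDot ξ = I * dotProductCLM n ξ v * g.fourierDot ξ := by
  simp only [fourierDot_apply, ← dotProductCLM_apply]
  rw [integral_cexp_I_mul_ofReal_mul_lineDerivOp, map_neg, neg_apply, ofReal_neg]
  ring

theorem moyal_eq_moyalIntegral (Θ : Matrix (Fin n) (Fin n) ℝ) (f g : (Fin n → ℝ) → ℂ)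
    (x : Fin n → ℝ) :
    moyal n Θ f g x = (((2 * π) ^ n : ℝ) : ℂ)⁻¹ *
      moyalIntegral (dotProductCLM n) (fun ξ => (1 / 2 : ℝ) • Θ.mulVec ξ) volume f
        (fun ξ => ∫ y, cexp (I * ((-ξ) ⬝ᵥ y : ℝ)) * g y) x := by
  rw [moyal, moyalIntegral]
  unfold moyalIntegrand
  congr 2 with ξ
  rw [← integral_const_mul]
  congr 1 with y
  have hphase : ∑ i, ξ i * (x i - y i) = ξ ⬝ᵥ x + (-ξ) ⬝ᵥ y := by
    rw [neg_dotProduct, ← sub_eq_add_neg, ← dotProduct_sub]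
    rfl
  rw [hphase, ofReal_add, mul_add, Complex.exp_add, dotProductCLM_apply]
  ring

theorem moyal_eq_moyalIntegral_fourierDot (Θ : Matrix (Fin n) (Fin n) ℝ)
    (f g : 𝓢(Fin n → ℝ, ℂ)) :
    moyal n Θ f g = fun x => (((2 * π) ^ n : ℝ) : ℂ)⁻¹ *
      moyalIntegral (dotProductCLM n) (fun ξ => (1 / 2 : ℝ) • Θ.mulVec ξ) volume f g.fourierDot
        x := by
  funext x
  simp only [moyal_eq_moyalIntegral, ← fourierDot_apply]

end Moyal

theorem moyal_leibniz_general (n : ℕ) (Θ : Matrix (Fin n) (Fin n) ℝ)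
    (f g : SchwartzMap (Fin n → ℝ) ℂ) (μ : Fin n) :
    ∀ x : Fin n → ℝ,
      pderiv' n μ (moyal n Θ (fun y => f y) (fun y => g y)) x
        = moyal n Θ (pderiv' n μ (fun y => f y)) (fun y => g y) x
          + moyal n Θ (fun y => f y) (pderiv' n μ (fun y => g y)) x := by
  intro x
  set e : Fin n → ℝ := Pi.single μ 1
  show fderiv ℝ (moyal n Θ f g) x e = moyal n Θ (∂_{e} f : 𝓢(Fin n → ℝ, ℂ)) g x +
    moyal n Θ f (∂_{e} g : 𝓢(Fin n → ℝ, ℂ)) x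
  have hA : Continuous fun ξ : Fin n → ℝ => (1 / 2 : ℝ) • Θ.mulVec ξ :=
    (continuous_const.matrix_mulVec continuous_id).fun_const_smul _
  have hĝ : ⇑(∂_{e} g : 𝓢(Fin n → ℝ, ℂ)).fourierDot =
      fun ξ => I * dotProductCLM n ξ e * g.fourierDot ξ :=
    funext (g.fourierDot_lineDerivOp e)
  rw [moyal_eq_moyalIntegral_fourierDot, moyal_eq_moyalIntegral_fourierDot,
    moyal_eq_moyalIntegral_fourierDot, fderiv_const_mul
      (hasFDerivAt_moyalIntegral _ volume hA f g.fourierDot x).differentiableAt,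
    FunLike.coe_smul, Pi.smul_apply, fderiv_moyalIntegral_apply _ volume hA, hĝ, smul_eq_mul,
    mul_add]

/-- Leibniz rule for the Moyal product of Schwartz functions:
`∂_μ (f ⋆_Θ g) = (∂_μ f) ⋆_Θ g + f ⋆_Θ (∂_μ g)`. -/
theorem moyal_leibniz (n : ℕ) (Θ : Matrix (Fin n) (Fin n) ℝ)
    (hΘ : Θ.transpose = -Θ) (f g : SchwartzMap (Fin n → ℝ) ℂ) (μ : Fin n) :
    ∀ x : Fin n → ℝ,
      pderiv' n μ (moyal n Θ (fun y => f y) (fun y => g y)) x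
        = moyal n Θ (pderiv' n μ (fun y => f y)) (fun y => g y) x
          + moyal n Θ (fun y => f y) (pderiv' n μ (fun y => g y)) x :=
  moyal_leibniz_general n Θ f g μ
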